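/- arXiv:2311.04118 — 4 statements merged into one kernel-verified Lean document; each statement's English description precedes it below -/
import Mathlib

section
/- Let A be a local Artinian ring with maximal ideal M and residue field F, let M₀ be an A-module and N₀ a free A-module (possibly of infinite rank), and let Φ: M₀ → N₀ be an A-linear map. If the induced F-linear map M₀ ⊗_A F → N₀ ⊗_A F is injective, then Φ is injective. -/
/-!
Since `F = A/M` is a field, the injective map `φ` has a left inverse `ψ`, and as `N₀` is free
(hence projective), `ψ` composed with the reduction of `N₀` lifts to `Ψ : N₀ → M₀`. Then
`T = Ψ ∘ Φ` is congruent to the identity modulo `M`, so `T - 1` maps `M^k M₀` into `M^(k+1) M₀`.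
An element of `ker Φ ⊆ ker T` therefore lies in every `M^k M₀`, which vanishes for large `k`
because the maximal ideal of an Artinian local ring is nilpotent.
-/

namespace Submodule

variable {R M : Type*} [CommRing R] [AddCommGroup M] [Module R M] {I : Ideal R}

theorem sub_mem_pow_succ_smul_top_of_mem_pow_smul_top {f : M →ₗ[R] M}
    (hf : ∀ m, f m - m ∈ I • (⊤ : Submodule R M)) {k : ℕ} {m : M}
    (hm : m ∈ I ^ k • (⊤ : Submodule R M)) : f m - m ∈ I ^ (k + 1) • (⊤ : Submodule R M) := by
  have hmap : (I ^ k • ⊤ : Submodule R M).map (f - LinearMap.id) ≤ I ^ (k + 1) • ⊤ := by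
    rw [map_smul'', pow_succ, mul_smul]
    refine smul_mono le_rfl ?_
    rintro _ ⟨x, -, rfl⟩
    exact hf x
  exact hmap ⟨m, hm, rfl⟩

theorem injective_of_sub_mem_smul_top (hI : IsNilpotent I) {f : M →ₗ[R] M}
    (hf : ∀ m, f m - m ∈ I • (⊤ : Submodule R M)) : Function.Injective f := by
  obtain ⟨n, hn⟩ := hI
  rw [injective_iff_map_eq_zero]
  intro m hm
  have hmem : ∀ k : ℕ, m ∈ I ^ k • (⊤ : Submodule R M) := by
    intro k
    induction k with
    | zero => simp
    | succ k ih => simpa [hm] using neg_mem (sub_mem_pow_succ_smul_top_of_mem_pow_smul_top hf ih)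
  simpa [hn] using hmem n

end Submodule

theorem LinearMap.exists_comp_sub_mem_smul_top {R M N : Type*} [CommRing R] [AddCommGroup M]
    [Module R M] [AddCommGroup N] [Module R N] [Module.Projective R N] (I : Ideal R)
    [I.IsMaximal] (f : M →ₗ[R] N)
    (hf : ∀ m, f m ∈ I • (⊤ : Submodule R N) → m ∈ I • (⊤ : Submodule R M)) :
    ∃ g : N →ₗ[R] M, ∀ m, g (f m) - m ∈ I • (⊤ : Submodule R M) := by
  let := Ideal.Quotient.field I
  have hker : LinearMap.ker (f.reduceModIdeal I) = ⊥ := by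
    rw [LinearMap.ker_eq_bot']
    intro x hx
    obtain ⟨m, rfl⟩ := Submodule.mkQ_surjective _ x
    exact (Submodule.Quotient.mk_eq_zero _).mpr (hf m ((Submodule.Quotient.mk_eq_zero _).mp hx))
  obtain ⟨ψ, hψ⟩ := (f.reduceModIdeal I).exists_leftInverse_of_injective hker
  obtain ⟨g, hg⟩ := Module.projective_lifting_property (I • ⊤ : Submodule R M).mkQ
    ((ψ.restrictScalars R).comp (I • ⊤ : Submodule R N).mkQ) (Submodule.mkQ_surjective _)
  refine ⟨g, fun m ↦ ?_⟩
  rw [← Submodule.Quotient.mk_eq_zero, Submodule.Quotient.mk_sub, sub_eq_zero]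
  calc Submodule.Quotient.mk (g (f m))
      = ψ (f.reduceModIdeal I (Submodule.Quotient.mk m)) := LinearMap.congr_fun hg (f m)
    _ = Submodule.Quotient.mk m := LinearMap.congr_fun hψ _

/-- Improved Nakayama for Artinian local rings, injectivity part.
Let `A` be a local Artinian ring with maximal ideal `M` and residue field `F`,
`M₀` an `A`-module and `N₀` a *free* `A`-module (possibly of infinite rank), and
`Φ : M₀ →ₗ[A] N₀` an `A`-linear map.  If the induced `F`-linear map
`M₀ ⊗_A F → N₀ ⊗_A F` is injective (equivalently, `Φ ⁻¹ (M • N₀) ⊆ M • M₀`),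
then `Φ` is injective. -/
theorem stmt1 {A : Type*} [CommRing A] [IsArtinianRing A] [IsLocalRing A]
    {M₀ N₀ : Type*} [AddCommGroup M₀] [Module A M₀] [AddCommGroup N₀] [Module A N₀]
    [Module.Free A N₀]
    (Φ : M₀ →ₗ[A] N₀)
    (h : ∀ m : M₀, Φ m ∈ (IsLocalRing.maximalIdeal A) • (⊤ : Submodule A N₀) →
      m ∈ (IsLocalRing.maximalIdeal A) • (⊤ : Submodule A M₀)) :
    Function.Injective Φ := by
  obtain ⟨Ψ, hΨ⟩ := Φ.exists_comp_sub_mem_smul_top _ h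
  have hnil : IsNilpotent (IsLocalRing.maximalIdeal A) :=
    (isArtinianRing_iff_isNilpotent_maximalIdeal A).mp ‹_›
  have hΨΦ : Function.Injective (Ψ ∘ₗ Φ) := Submodule.injective_of_sub_mem_smul_top hnil hΨ
  exact hΨΦ.of_comp (f := Ψ)
end

section
/- Let V be a finite-dimensional F-vector space. The pairing Γ^n(V^∨) × Sym^n(V) → F defined on pure symbols by ([φ]_n, x₁x₂⋯x_n) ↦ φ(x₁)⋯φ(x_n) is a well-defined perfect pairing, inducing an isomorphism Γ^n(V^∨) ≅ Sym^n(V)^∨. -/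
/-!
Both `Γ^n` and `Sym^n` have monomial bases indexed by the multi-indices `a` with `|a| = n`, and
the coefficient pairing `⟨[e]_a, Xᵇ⟩ = δ_{ab}` makes them dual to each other; being
nondegenerate on both sides between finite-dimensional spaces, it is perfect. Since
`[w]_n = ∑_{|a| = n} wᵃ [e]_a`, pairing a pure symbol with a form `f = ∑ f_a Xᵃ` gives
`∑ f_a wᵃ = f(w)`.
-/

noncomputable section

/-- The divided power algebra `Γ(V)` of `V = R^d`, realized concretely on the monomial
basis `[e₁]_{a₁} ⋯ [e_d]_{a_d}` indexed by multi-indices `a : Fin d → ℕ`. -/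
abbrev DP (R : Type*) [CommRing R] (d : ℕ) := (Fin d → ℕ) →₀ R

/-- Multiplication in the divided power algebra:
`[e]_a · [e]_b = (∏ᵢ C(aᵢ+bᵢ, aᵢ)) [e]_{a+b}`, extended bilinearly. -/
def dpMul {R : Type*} [CommRing R] {d : ℕ} (x y : DP R d) : DP R d :=
  x.sum fun a xa => y.sum fun b yb =>
    Finsupp.single (a + b) (xa * yb * ((∏ i, Nat.choose (a i + b i) (a i) : ℕ) : R))

/-- The pure symbol `[v]_n = v ⊗ ⋯ ⊗ v ∈ Γ^n(V)`; in the monomial basis,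
`[v]_n = ∑_{|a| = n} (∏ᵢ vᵢ^{aᵢ}) [e]_a`. -/
def dpSymbol {R : Type*} [CommRing R] {d : ℕ} (v : Fin d → R) (n : ℕ) : DP R d :=
  ∑ a ∈ Finset.Nat.antidiagonalTuple d n, Finsupp.single a (∏ i, v i ^ a i)

/-- The `n`-th divided power `Γ^n(V) ⊂ Γ(V)`: the homogeneous component of degree `n`. -/
def GammaDP (R : Type*) [CommRing R] (d n : ℕ) : Submodule R (DP R d) :=
  Finsupp.supported R R {a : Fin d → ℕ | ∑ i, a i = n}

/-- The unit `1 = [v]₀` of the divided power algebra. -/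
def dpOne {R : Type*} [CommRing R] {d : ℕ} : DP R d := Finsupp.single 0 1

/-- Finite products in the divided power algebra. -/
def dpProd {R : Type*} [CommRing R] {d k : ℕ} (f : Fin k → DP R d) : DP R d :=
  (List.ofFn f).foldr dpMul dpOne

open MvPolynomial

section Pairing

variable {R : Type*} [CommRing R] {d n : ℕ}

/-- `⟨x, f⟩ = ∑ₐ xₐ · coeff_a f`, which makes the basis `[e]_a` of `Γ` dual to the
monomials `Xᵃ`. -/
def dpPairing (R : Type*) [CommRing R] (d : ℕ) : DP R d →ₗ[R] MvPolynomial (Fin d) R →ₗ[R] R :=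
  Finsupp.lsum R fun a =>
    LinearMap.toSpanSingleton R _ (lcoeff R (Finsupp.equivFunOnFinite.symm a))

@[simp]
lemma dpPairing_single (a : Fin d → ℕ) (c : R) (f : MvPolynomial (Fin d) R) :
    dpPairing R d (Finsupp.single a c) f = c * coeff (Finsupp.equivFunOnFinite.symm a) f := by
  simp [dpPairing]

lemma dpPairing_monomial (x : DP R d) (a : Fin d → ℕ) :
    dpPairing R d x (monomial (Finsupp.equivFunOnFinite.symm a) 1) = x a := by
  suffices (dpPairing R d).flip (monomial (Finsupp.equivFunOnFinite.symm a) 1) =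
      Finsupp.lapply a from LinearMap.congr_fun this x
  refine Finsupp.lhom_ext fun b c => ?_
  simp [coeff_monomial, Finsupp.single_apply, eq_comm]

lemma dpSymbol_mem_gammaDP (w : Fin d → R) : dpSymbol w n ∈ GammaDP R d n :=
  Submodule.sum_mem _ fun _ ha =>
    Finsupp.single_mem_supported R _ (Finset.Nat.mem_antidiagonalTuple.mp ha)

lemma support_subset_map_antidiagonalTuple {f : MvPolynomial (Fin d) R}
    (hf : f ∈ homogeneousSubmodule (Fin d) R n) :
    f.support ⊆ (Finset.Nat.antidiagonalTuple d n).map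
      Finsupp.equivFunOnFinite.symm.toEmbedding := by
  intro v hv
  refine Finset.mem_map_equiv.mpr (Finset.Nat.mem_antidiagonalTuple.mpr ?_)
  change ∑ i, v i = n
  rw [← Finsupp.degree_eq_sum, Finsupp.degree_apply]
  exact (hf.degree_eq_sum_deg_support hv).symm

lemma dpPairing_dpSymbol (w : Fin d → R) {f : MvPolynomial (Fin d) R}
    (hf : f ∈ homogeneousSubmodule (Fin d) R n) :
    dpPairing R d (dpSymbol w n) f = eval w f :=
  calc dpPairing R d (dpSymbol w n) f
      = ∑ a ∈ Finset.Nat.antidiagonalTuple d n,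
          coeff (Finsupp.equivFunOnFinite.symm a) f * ∏ i, w i ^ a i := by
        simp [dpSymbol, mul_comm]
    _ = ∑ v ∈ (Finset.Nat.antidiagonalTuple d n).map Finsupp.equivFunOnFinite.symm.toEmbedding,
          coeff v f * ∏ i, w i ^ v i := by
        simp
    _ = ∑ v ∈ f.support, coeff v f * ∏ i, w i ^ v i :=
        (Finset.sum_subset (support_subset_map_antidiagonalTuple hf) fun v _ hv => by
          simp [notMem_support_iff.mp hv]).symm
    _ = eval w f := (eval_eq' w f).symm

def gammaSymPairing (R : Type*) [CommRing R] (d n : ℕ) :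
    GammaDP R d n →ₗ[R] homogeneousSubmodule (Fin d) R n →ₗ[R] R :=
  (dpPairing R d).compl₁₂ (GammaDP R d n).subtype (homogeneousSubmodule (Fin d) R n).subtype

lemma gammaSymPairing_injective : Function.Injective (gammaSymPairing R d n) := by
  refine (injective_iff_map_eq_zero _).mpr fun x hx => Subtype.ext <| Finsupp.ext fun a => ?_
  by_cases ha : ∑ i, a i = n
  · have hmem : monomial (Finsupp.equivFunOnFinite.symm a) (1 : R) ∈
        homogeneousSubmodule (Fin d) R n :=
      isHomogeneous_monomial 1 (by simpa [Finsupp.degree_eq_sum] using ha)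
    simpa [gammaSymPairing, dpPairing_monomial] using LinearMap.congr_fun hx ⟨_, hmem⟩
  · exact Finsupp.notMem_support_iff.mp fun h => ha (x.2 h)

lemma gammaSymPairing_flip_injective :
    Function.Injective (gammaSymPairing R d n).flip := by
  refine (injective_iff_map_eq_zero _).mpr fun f hf =>
    Subtype.ext <| MvPolynomial.ext _ _ fun v => ?_
  by_cases hv : ∑ i, v i = n
  · have hmem : Finsupp.single (⇑v) (1 : R) ∈ GammaDP R d n :=
      Finsupp.single_mem_supported R _ hv
    simpa [gammaSymPairing] using LinearMap.congr_fun hf ⟨_, hmem⟩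
  · exact f.2.coeff_eq_zero (by simpa [Finsupp.degree_eq_sum] using hv)

-- Naming `M` and `N` lets unification see the submodules' `AddCommGroup` structures.
instance (F : Type*) [Field F] (d n : ℕ) :
    LinearMap.IsPerfPair (M := GammaDP F d n) (N := homogeneousSubmodule (Fin d) F n)
      (gammaSymPairing F d n) :=
  have : FiniteDimensional F (homogeneousSubmodule (Fin d) F n) :=
    Module.Finite.iff_fg.mpr (homogeneousSubmodule_fg _ _ n)
  .of_injective' gammaSymPairing_injective gammaSymPairing_flip_injective

end Pairing

open MvPolynomial in
/-- Let `V` be a finite-dimensional `F`-vector space (here `V = F^d`, so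
that `V^∨ = F^d` via dual coordinates and `Sym^n(V)` is the space of homogeneous polynomials
of degree `n`).  The pairing `Γ^n(V^∨) × Sym^n(V) → F`, defined on pure symbols by
`([φ]_n, x₁x₂⋯x_n) ↦ φ(x₁)⋯φ(x_n)`, is a well-defined perfect pairing, inducing an
isomorphism `Γ^n(V^∨) ≅ Sym^n(V)^∨`.  Concretely: pure symbols lie in `Γ^n`, and there is a
linear isomorphism `e : Γ^n(V^∨) ≃ Sym^n(V)^∨` with
`e([φ]_n)(f) = f(φ)` for every `φ ∈ V^∨` and every `f ∈ Sym^n(V)` (evaluation of the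
degree-`n` form `f` at the coordinates of `φ`). -/
theorem stmt8 {F : Type*} [Field F] {d n : ℕ} :
    (∀ w : Fin d → F, dpSymbol w n ∈ GammaDP F d n) ∧
    ∃ e : (GammaDP F d n) ≃ₗ[F] Module.Dual F (homogeneousSubmodule (Fin d) F n),
      ∀ (w : Fin d → F) (hw : dpSymbol w n ∈ GammaDP F d n)
        (f : MvPolynomial (Fin d) F) (hf : f ∈ homogeneousSubmodule (Fin d) F n),
        e ⟨dpSymbol w n, hw⟩ ⟨f, hf⟩ = eval w f :=
  ⟨dpSymbol_mem_gammaDP,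
    LinearMap.toPerfPair (M := GammaDP F d n) (N := homogeneousSubmodule (Fin d) F n)
      (gammaSymPairing F d n),
    fun w _ _ hf => dpPairing_dpSymbol w hf⟩
end
end

section
/- Let F be an algebraically closed field, V a finite-dimensional F-vector space, and a, b positive F-disjoint integers. If y, y′ ∈ V are nonzero and not collinear, then the images of the multiplication maps M_y: Γ^a(V) → Γ^{a+b}(V), x ↦ x[y]_b and M_{y′}: x ↦ x[y′]_b intersect only in 0. -/
noncomputable section

/-!
Under the pairing of `Γ(V)` with the polynomial ring for which the monomial bases `[e]_c` and
`X^c` are dual, multiplication by `[w]_n` is adjoint to the `n`-th Hasse derivative along `w`,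
the `tⁿ`-coefficient of `p(X + t w)`. Extend `y, y'` to a basis and test against the monomials
`∏ ℓⱼ^{cⱼ}` in the dual coordinates `ℓⱼ`, with `ℓ₀(y) = 1 = ℓ₁(y')`. The pairing of `x[y]_b` with
such a monomial is `C(c₀, b)` times a pairing of `x ∈ Γ^a`, so it vanishes unless `c₀ ≥ b` and
`|c| = a + b`; computing it as the pairing of `x'[y']_b`, it also vanishes unless `c₁ ≥ b`.
As `a < b`, not both can hold, and these monomials span the polynomial ring.
-/

open Finset MvPolynomial
open scoped Matrix

theorem Module.Basis.sumExtend_apply_inl {K V ι : Type*} [DivisionRing K] [AddCommGroup V]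
    [Module K V] {v : ι → V} (hs : LinearIndependent K v) (i : ι) :
    sumExtend hs (.inl i) = v i := by
  simp only [sumExtend, reindex_apply, extend_apply_self]
  rfl

theorem Module.Basis.toMatrix_piBasisFun_mulVec_self {R σ ι : Type*} [CommRing R] [Fintype σ]
    [Fintype ι] [DecidableEq ι] (B : Module.Basis ι R (σ → R)) (j : ι) :
    B.toMatrix (Pi.basisFun R σ) *ᵥ B j = Pi.single j 1 := by
  have hrepr : ⇑((Pi.basisFun R σ).repr (B j)) = B j := funext (Pi.basisFun_repr R σ _)
  rw [← hrepr, (Pi.basisFun R σ).toMatrix_mulVec_repr B, B.repr_self, Finsupp.single_eq_pi_single]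

namespace DividedPower

variable {R : Type*} [CommRing R] {d : ℕ}

lemma dpMul_zero_left (v : DP R d) : dpMul 0 v = 0 :=
  Finsupp.sum_zero_index

lemma dpMul_add_left (u v w : DP R d) : dpMul (u + v) w = dpMul u w + dpMul v w := by
  refine Finsupp.sum_add_index' (by simp) fun c r s => ?_
  rw [← Finsupp.sum_add]
  refine Finsupp.sum_congr fun e _ => ?_
  rw [← Finsupp.single_add, add_mul, add_mul]

lemma dpMul_single_dpSymbol_apply (c M : Fin d → ℕ) (r : R) (w : Fin d → R) (n : ℕ) :
    dpMul (Finsupp.single c r) (dpSymbol w n) M =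
      if (∀ i, c i ≤ M i) ∧ ∑ i, (M i - c i) = n then
        r * ((∏ i, w i ^ (M i - c i)) * ∏ i, ((M i).choose (c i) : R))
      else 0 := by
  classical
  have hsum : dpMul (Finsupp.single c r) (dpSymbol w n) =
      ∑ e ∈ Nat.antidiagonalTuple d n, Finsupp.single (c + e)
        (r * (∏ i, w i ^ e i) * ((∏ i, (c i + e i).choose (c i) : ℕ) : R)) := by
    rw [dpMul, Finsupp.sum_single_index (by simp), dpSymbol,
      ← Finsupp.sum_finsetSum_index (by simp) fun _ _ _ => by rw [← Finsupp.single_add]; ring_nf]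
    exact Finset.sum_congr rfl fun e _ => Finsupp.sum_single_index (by simp)
  have hadd : ∀ e, c + e = M ↔ (∀ i, c i ≤ M i) ∧ M - c = e := fun e =>
    ⟨fun h => ⟨fun i => h ▸ Nat.le_add_right _ _, h ▸ add_tsub_cancel_left c e⟩,
      fun ⟨hle, h⟩ => h ▸ add_tsub_cancel_of_le (Pi.le_def.2 hle)⟩
  simp only [hsum, Finsupp.finsetSum_apply, Finsupp.single_apply, hadd, ite_and]
  rw [Finset.sum_ite_irrel, Finset.sum_ite_eq, Finset.sum_const_zero]
  simp only [Nat.mem_antidiagonalTuple, Pi.sub_apply]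
  split_ifs with hle
  · simp only [Nat.add_sub_cancel' (hle _), Nat.cast_prod, mul_assoc]
  all_goals rfl

def dpPairing : DP R d →ₗ[R] MvPolynomial (Fin d) R →ₗ[R] R :=
  Finsupp.lsum R fun c => LinearMap.id.smulRight (lcoeff R (Finsupp.equivFunOnFinite.symm c))

lemma dpPairing_apply (u : DP R d) (p : MvPolynomial (Fin d) R) :
    dpPairing u p = u.sum fun c r => r * coeff (Finsupp.equivFunOnFinite.symm c) p := by
  simp [dpPairing]

lemma dpPairing_single (c : Fin d → ℕ) (r : R) (p : MvPolynomial (Fin d) R) :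
    dpPairing (Finsupp.single c r) p = r * coeff (Finsupp.equivFunOnFinite.symm c) p := by
  simp [dpPairing]

lemma dpPairing_monomial (u : DP R d) (M : Fin d → ℕ) :
    dpPairing u (monomial (Finsupp.equivFunOnFinite.symm M) 1) = u M := by
  induction u using Finsupp.induction_linear with
  | zero => simp
  | add u v hu hv => simp [hu, hv]
  | single c r =>
    simp [dpPairing_single, coeff_monomial, Finsupp.single_apply, eq_comm]

lemma dpPairing_eq_zero_of_isHomogeneous {u : DP R d} {a n : ℕ} (hu : u ∈ GammaDP R d a)
    {p : MvPolynomial (Fin d) R} (hp : p.IsHomogeneous n) (hn : n ≠ a) : dpPairing u p = 0 := by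
  refine (dpPairing_apply u p).trans (Finset.sum_eq_zero fun c hc => ?_)
  dsimp only
  rw [hp.coeff_eq_zero, mul_zero]
  have hdeg : ∑ i, c i = a := (Finsupp.mem_supported R u).1 hu hc
  simpa [Finsupp.degree_eq_sum, hdeg] using hn.symm

variable {σ : Type*}

def shiftAlong (w : σ → R) : MvPolynomial σ R →ₐ[R] Polynomial (MvPolynomial σ R) :=
  aeval fun i => Polynomial.C (X i) + Polynomial.C (C (w i)) * Polynomial.X

lemma shiftAlong_X_pow (w : σ → R) (i : σ) (m : ℕ) :
    shiftAlong w (X i ^ m) = ∑ k ∈ range (m + 1),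
      Polynomial.C (monomial (Finsupp.single i k) (w i ^ (m - k) * (m.choose k : R))) *
        Polynomial.X ^ (m - k) := by
  rw [map_pow, shiftAlong, aeval_X, add_pow]
  refine Finset.sum_congr rfl fun k _ => ?_
  rw [← mul_one (_ * _ : R), ← C_mul_monomial, ← X_pow_eq_monomial]
  simp only [map_mul, map_pow, map_natCast]
  ring

lemma shiftAlong_monomial_one [Fintype σ] [DecidableEq σ] (w : σ → R) (M : σ → ℕ) :
    shiftAlong w (monomial (Finsupp.equivFunOnFinite.symm M) 1) =
      ∑ k ∈ Fintype.piFinset fun i => range (M i + 1),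
        Polynomial.C (monomial (Finsupp.equivFunOnFinite.symm k)
          ((∏ i, w i ^ (M i - k i)) * ∏ i, ((M i).choose (k i) : R))) *
        Polynomial.X ^ (∑ i, (M i - k i)) := by
  rw [Finsupp.equivFunOnFinite_symm_eq_sum, monomial_sum_one, map_prod]
  simp only [← X_pow_eq_monomial, shiftAlong_X_pow]
  rw [Finset.prod_univ_sum]
  refine Finset.sum_congr rfl fun k _ => ?_
  rw [Finset.prod_mul_distrib, ← map_prod, Finset.prod_pow_eq_pow_sum, ← monomial_sum_prod,
    Finset.prod_mul_distrib, Finsupp.equivFunOnFinite_symm_eq_sum]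

lemma coeff_coeff_shiftAlong_monomial_one [Fintype σ] (w : σ → R) (n : ℕ) (c M : σ → ℕ) :
    coeff (Finsupp.equivFunOnFinite.symm c)
        ((shiftAlong w (monomial (Finsupp.equivFunOnFinite.symm M) 1)).coeff n) =
      if (∀ i, c i ≤ M i) ∧ ∑ i, (M i - c i) = n then
        (∏ i, w i ^ (M i - c i)) * ∏ i, ((M i).choose (c i) : R)
      else 0 := by
  classical
  simp only [shiftAlong_monomial_one, Polynomial.finsetSum_coeff, Polynomial.coeff_C_mul_X_pow,
    coeff_sum, apply_ite (coeff _), coeff_monomial, coeff_zero, EmbeddingLike.apply_eq_iff_eq]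
  simp only [← ite_and, @and_comm (n = _)]
  simp only [ite_and, Finset.sum_ite_eq', Fintype.mem_piFinset, mem_range, Nat.lt_succ_iff,
    eq_comm (a := n)]

theorem dpPairing_dpMul_dpSymbol (u : DP R d) (w : Fin d → R) (n : ℕ)
    (p : MvPolynomial (Fin d) R) :
    dpPairing (dpMul u (dpSymbol w n)) p = dpPairing u ((shiftAlong w p).coeff n) := by
  induction u using Finsupp.induction_linear with
  | zero => simp [dpMul_zero_left]
  | add u v hu hv => simp only [dpMul_add_left, map_add, LinearMap.add_apply, hu, hv]
  | single c r =>
    suffices dpPairing (dpMul (Finsupp.single c r) (dpSymbol w n)) =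
        dpPairing (Finsupp.single c r) ∘ₗ
          (Polynomial.lcoeff (MvPolynomial (Fin d) R) n).restrictScalars R ∘ₗ
          (shiftAlong w).toLinearMap from
      LinearMap.congr_fun this p
    refine linearMap_ext fun s => LinearMap.ext_ring ?_
    obtain ⟨M, rfl⟩ := Finsupp.equivFunOnFinite.symm.surjective s
    simp only [LinearMap.comp_apply, AlgHom.toLinearMap_apply, LinearMap.restrictScalars_apply,
      Polynomial.lcoeff_apply, dpPairing_monomial, dpMul_single_dpSymbol_apply, dpPairing_single,
      coeff_coeff_shiftAlong_monomial_one, mul_ite, mul_zero]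

section LinearForms

variable [Fintype σ] {ι κ : Type*} [Fintype ι]

def linearForm (v : σ → R) : MvPolynomial σ R := ∑ i, C (v i) * X i

lemma isHomogeneous_linearForm (v : σ → R) : (linearForm v).IsHomogeneous 1 :=
  IsHomogeneous.sum _ _ _ fun _ _ => isHomogeneous_C_mul_X _ _

lemma shiftAlong_linearForm (w v : σ → R) :
    shiftAlong w (linearForm v) =
      Polynomial.C (linearForm v) + Polynomial.C (C (v ⬝ᵥ w)) * Polynomial.X := by
  simp only [linearForm, dotProduct, map_sum, map_mul, shiftAlong, aeval_X, aeval_C,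
    MvPolynomial.algebraMap_eq, mul_add, Finset.sum_add_distrib, Finset.sum_mul,
    Polynomial.algebraMap_apply, mul_assoc]

def linearSubst (A : Matrix ι σ R) : MvPolynomial ι R →ₐ[R] MvPolynomial σ R :=
  aeval fun j => linearForm (A j)

lemma linearSubst_linearForm (A : Matrix ι σ R) (v : ι → R) :
    linearSubst A (linearForm v) = linearForm (v ᵥ* A) := by
  simp only [linearSubst, linearForm, map_sum, map_mul, aeval_X, aeval_C,
    MvPolynomial.algebraMap_eq]
  simp only [Finset.mul_sum, Matrix.vecMul, dotProduct, map_sum, Finset.sum_mul, ← mul_assoc,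
    ← map_mul]
  exact Finset.sum_comm

lemma linearSubst_comp [Fintype κ] (A : Matrix ι σ R) (B : Matrix κ ι R) :
    (linearSubst A).comp (linearSubst B) = linearSubst (B * A) := by
  refine algHom_ext fun k => ?_
  rw [AlgHom.comp_apply, linearSubst, linearSubst, linearSubst, aeval_X, aeval_X]
  rw [← linearSubst, linearSubst_linearForm]
  congr 1

lemma linearSubst_one [DecidableEq σ] : linearSubst (1 : Matrix σ σ R) = AlgHom.id R _ := by
  refine algHom_ext fun i => ?_
  simp [linearSubst, linearForm, Matrix.one_apply]

lemma linearSubst_surjective [DecidableEq σ] {A : Matrix ι σ R} {A' : Matrix σ ι R}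
    (h : A' * A = 1) : Function.Surjective (linearSubst A) := fun p =>
  ⟨linearSubst A' p, by rw [← AlgHom.comp_apply, linearSubst_comp, h, linearSubst_one]; rfl⟩

def linearMonomial (A : Matrix ι σ R) (c : ι → ℕ) : MvPolynomial σ R :=
  ∏ j, linearForm (A j) ^ c j

lemma linearSubst_monomial_one (A : Matrix ι σ R) (c : ι → ℕ) :
    linearSubst A (monomial (Finsupp.equivFunOnFinite.symm c) 1) = linearMonomial A c := by
  rw [linearSubst, aeval_monomial, map_one, one_mul, Finsupp.prod_fintype _ _ fun _ => pow_zero _]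
  rfl

lemma isHomogeneous_linearMonomial (A : Matrix ι σ R) (c : ι → ℕ) :
    (linearMonomial A c).IsHomogeneous (∑ j, c j) :=
  IsHomogeneous.prod _ _ _ fun j _ => by
    simpa using (isHomogeneous_linearForm (A j)).pow (c j)

lemma coeff_shiftAlong_linearMonomial [DecidableEq ι] {A : Matrix ι σ R} {w : σ → R} {j : ι}
    (hw : A *ᵥ w = Pi.single j 1) (c : ι → ℕ) (n : ℕ) :
    (shiftAlong w (linearMonomial A c)).coeff n =
      (c j).choose n • linearMonomial A (Function.update c j (c j - n)) := by
  have hfactor : ∀ i, shiftAlong w (linearForm (A i)) =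
      Polynomial.C (linearForm (A i)) + Polynomial.C (C ((A *ᵥ w) i)) * Polynomial.X :=
    fun i => shiftAlong_linearForm w (A i)
  rw [hw] at hfactor
  have hrest : ∏ i ∈ univ.erase j, shiftAlong w (linearForm (A i) ^ c i) =
      Polynomial.C (∏ i ∈ univ.erase j, linearForm (A i) ^ c i) := by
    rw [map_prod]
    refine Finset.prod_congr rfl fun i hi => ?_
    rw [map_pow, hfactor, Pi.single_eq_of_ne (ne_of_mem_erase hi), map_zero, map_zero, zero_mul,
      add_zero, map_pow]
  rw [linearMonomial, map_prod, ← Finset.mul_prod_erase _ _ (mem_univ j), hrest, map_pow, hfactor,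
    Pi.single_eq_same, map_one, map_one, one_mul, add_comm, Polynomial.coeff_mul_C,
    Polynomial.coeff_X_add_C_pow, linearMonomial, ← Finset.mul_prod_erase _ _ (mem_univ j),
    Function.update_self, nsmul_eq_mul]
  have hupdate : ∏ i ∈ univ.erase j, linearForm (A i) ^ Function.update c j (c j - n) i =
      ∏ i ∈ univ.erase j, linearForm (A i) ^ c i :=
    Finset.prod_congr rfl fun i hi => by rw [Function.update_of_ne (ne_of_mem_erase hi)]
  rw [hupdate]
  ring

end LinearForms

variable {ι : Type*} [Fintype ι] {A : Matrix ι (Fin d) R}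

lemma eq_zero_of_forall_dpPairing_linearMonomial_eq_zero {A' : Matrix (Fin d) ι R}
    (hA : A' * A = 1) {z : DP R d} (h : ∀ c, dpPairing z (linearMonomial A c) = 0) : z = 0 := by
  have hvanish : dpPairing z ∘ₗ (linearSubst A).toLinearMap = 0 := by
    refine linearMap_ext fun s => LinearMap.ext_ring ?_
    obtain ⟨c, rfl⟩ := Finsupp.equivFunOnFinite.symm.surjective s
    simpa [linearSubst_monomial_one] using h c
  ext M
  obtain ⟨q, hq⟩ := linearSubst_surjective hA (monomial (Finsupp.equivFunOnFinite.symm M) 1)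
  rw [← dpPairing_monomial, ← hq]
  exact LinearMap.congr_fun hvanish q

variable [DecidableEq ι] {w : Fin d → R} {j : ι}

lemma dpPairing_dpMul_dpSymbol_linearMonomial (hw : A *ᵥ w = Pi.single j 1) (u : DP R d) (n : ℕ)
    (c : ι → ℕ) :
    dpPairing (dpMul u (dpSymbol w n)) (linearMonomial A c) =
      (c j).choose n • dpPairing u (linearMonomial A (Function.update c j (c j - n))) := by
  rw [dpPairing_dpMul_dpSymbol, coeff_shiftAlong_linearMonomial hw, map_nsmul]

lemma le_of_dpPairing_dpMul_dpSymbol_ne_zero (hw : A *ᵥ w = Pi.single j 1) {u : DP R d} {n : ℕ}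
    {c : ι → ℕ} (h : dpPairing (dpMul u (dpSymbol w n)) (linearMonomial A c) ≠ 0) : n ≤ c j := by
  by_contra hlt
  rw [dpPairing_dpMul_dpSymbol_linearMonomial hw, Nat.choose_eq_zero_of_lt (not_le.1 hlt),
    zero_smul] at h
  exact h rfl

lemma sum_eq_of_dpPairing_dpMul_dpSymbol_ne_zero (hw : A *ᵥ w = Pi.single j 1) {u : DP R d}
    {a n : ℕ} (hu : u ∈ GammaDP R d a) {c : ι → ℕ}
    (h : dpPairing (dpMul u (dpSymbol w n)) (linearMonomial A c) ≠ 0) : ∑ i, c i = a + n := by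
  have hle := le_of_dpPairing_dpMul_dpSymbol_ne_zero hw h
  rw [dpPairing_dpMul_dpSymbol_linearMonomial hw] at h
  have hdeg : ∑ i, Function.update c j (c j - n) i = a := by
    by_contra hne
    rw [dpPairing_eq_zero_of_isHomogeneous hu (isHomogeneous_linearMonomial _ _) hne,
      smul_zero] at h
    exact h rfl
  rw [Finset.sum_update_of_mem (mem_univ j), Finset.sdiff_singleton_eq_erase] at hdeg
  have := Finset.add_sum_erase univ c (mem_univ j)
  omega

end DividedPower

open DividedPower in
theorem stmt10_general {F : Type*} [Field F] {d : ℕ} {a b : ℕ}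
    (hab : a < b)
    (y y' : Fin d → F) (hy : y ≠ 0) (hcol : ∀ c : F, c • y ≠ y')
    {x x' : DP F d} (hx : x ∈ GammaDP F d a)
    (h : dpMul x (dpSymbol y b) = dpMul x' (dpSymbol y' b)) :
    dpMul x (dpSymbol y b) = 0 := by
  classical
  let B := Module.Basis.sumExtend ((LinearIndependent.pair_iff' hy).mpr hcol)
  have := FiniteDimensional.fintypeBasisIndex B
  have hy₀ : B.toMatrix (Pi.basisFun F (Fin d)) *ᵥ y = Pi.single (.inl 0) 1 := by
    simpa [B, Module.Basis.sumExtend_apply_inl] using B.toMatrix_piBasisFun_mulVec_self (.inl 0)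
  have hy₁ : B.toMatrix (Pi.basisFun F (Fin d)) *ᵥ y' = Pi.single (.inl 1) 1 := by
    simpa [B, Module.Basis.sumExtend_apply_inl] using B.toMatrix_piBasisFun_mulVec_self (.inl 1)
  refine eq_zero_of_forall_dpPairing_linearMonomial_eq_zero
    ((Pi.basisFun F (Fin d)).toMatrix_mul_toMatrix_flip B) fun c => ?_
  by_contra hne
  have hb₀ := le_of_dpPairing_dpMul_dpSymbol_ne_zero hy₀ hne
  have hb₁ := le_of_dpPairing_dpMul_dpSymbol_ne_zero hy₁ (h ▸ hne)
  have hsum := sum_eq_of_dpPairing_dpMul_dpSymbol_ne_zero hy₀ hx hne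
  have hpair := Finset.sum_le_sum_of_subset (f := c) (subset_univ {.inl 0, .inl 1})
  rw [Finset.sum_pair (by simp)] at hpair
  omega

/-- Let `F` be an algebraically closed field, `V` a finite-dimensional
`F`-vector space, and `a, b` positive `F`-disjoint integers.  If `y, y′ ∈ V` are nonzero
and not collinear, then the images of the multiplication maps
`M_y : Γ^a(V) → Γ^{a+b}(V)`, `x ↦ x[y]_b`, and `M_{y′} : x ↦ x[y′]_b`
intersect only in `0`. -/
theorem stmt10 {F : Type*} [Field F] [IsAlgClosed F] {d : ℕ} {a b : ℕ}
    (ha : 0 < a) (hab : a < b)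
    (hchar : ∀ p : ℕ, p.Prime → (p : F) = 0 → a < p ^ (b.factorization p))
    (y y' : Fin d → F) (hy : y ≠ 0) (hy' : y' ≠ 0) (hcol : ∀ c : F, c • y ≠ y')
    {x x' : DP F d} (hx : x ∈ GammaDP F d a) (hx' : x' ∈ GammaDP F d a)
    (h : dpMul x (dpSymbol y b) = dpMul x' (dpSymbol y' b)) :
    dpMul x (dpSymbol y b) = 0 :=
  stmt10_general hab y y' hy hcol hx h

end
end

section
/- Let F be a field, V a finite-dimensional F-vector space of dimension ≥ 2, and n ≥ 1. Suppose f′ ∈ GL(Γ^n(V))(F[ε]) is a linear automorphism over the dual numbers and λ: (V − {0}) → (F[ε])^× is a morphism of F-schemes such that f′([v]_n) = λ(v)·[v]_n identically on points. Then λ is constant; consequently, after rescaling, f′ fixes all pure symbols [v]_n and, if F is infinite, f′ is the identity. -/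
noncomputable section

/-!
Linearity of `f'` and `[t v]_n = tⁿ [v]_n` give `λ(t v) = λ(v)` for `t ≠ 0`: compare the
coordinates at the multi-index `n eᵢ`, where `[t v]_n` has the unit coordinate `(t vᵢ)ⁿ`.
Restricted to the line `t ↦ t v`, `λ₁` and `λ₂` become one-variable polynomials that are constant
on the infinitely many `t ≠ 0`, hence constant, so `λ(v) = λ(0)`.

For the spanning statement, a linear form `φ` vanishing on all `[v]_n` with `v ≠ 0` gives a
polynomial `v ↦ φ [v]_n` vanishing on the box `(F − {0})^d`, hence zero; its coefficients are the
values of `φ` on the monomial basis. So the pure symbols span `Γ^n` over `F`, and by base change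
over `F[ε]`.
-/

section Symbol

variable {R : Type*} [CommRing R] {d n : ℕ}

theorem dpSymbol_apply_of_mem {a : Fin d → ℕ} (ha : a ∈ Finset.Nat.antidiagonalTuple d n)
    (v : Fin d → R) : dpSymbol v n a = ∏ i, v i ^ a i := by
  rw [dpSymbol, Finsupp.finsetSum_apply, Finset.sum_eq_single_of_mem a ha]
  · exact Finsupp.single_eq_same
  · exact fun b _ hba => Finsupp.single_eq_of_ne' hba

theorem dpSymbol_apply_single (v : Fin d → R) (i : Fin d) :
    dpSymbol v n (Pi.single i n) = v i ^ n := by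
  rw [dpSymbol_apply_of_mem (by simp [Finset.Nat.mem_antidiagonalTuple])]
  simp [Pi.single_apply, pow_ite]

theorem dpSymbol_smul (t : R) (v : Fin d → R) :
    dpSymbol (t • v) n = t ^ n • dpSymbol v n := by
  simp only [dpSymbol, Finset.smul_sum, Finsupp.smul_single]
  refine Finset.sum_congr rfl fun a ha => ?_
  rw [← (Finset.Nat.mem_antidiagonalTuple).1 ha, ← Finset.prod_pow_eq_pow_sum, smul_eq_mul,
    ← Finset.prod_mul_distrib]
  simp only [Pi.smul_apply, smul_eq_mul, mul_pow]

theorem mapRange_dpSymbol {S : Type*} [CommRing S] (f : R →+* S) (v : Fin d → R) :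
    Finsupp.mapRange f f.map_zero (dpSymbol v n) = dpSymbol (fun j => f (v j)) n := by
  simp [dpSymbol, Finsupp.mapRange_finsetSum, map_prod]

end Symbol

section Span

open MvPolynomial

variable {d n : ℕ}

def dualSymbolPoly {R : Type*} [CommRing R] (φ : Module.Dual R (DP R d)) (n : ℕ) :
    MvPolynomial (Fin d) R :=
  ∑ b ∈ Finset.Nat.antidiagonalTuple d n,
    monomial (Finsupp.equivFunOnFinite.symm b) (φ (Finsupp.single b 1))

theorem eval_dualSymbolPoly {R : Type*} [CommRing R] (φ : Module.Dual R (DP R d))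
    (v : Fin d → R) : eval v (dualSymbolPoly φ n) = φ (dpSymbol v n) := by
  simp only [dualSymbolPoly, dpSymbol, map_sum, eval_monomial]
  refine Finset.sum_congr rfl fun b _ => ?_
  rw [Finsupp.prod_fintype _ _ fun i => pow_zero (v i),
    ← Finsupp.smul_single_one b (∏ i, v i ^ b i), map_smul, smul_eq_mul, mul_comm]
  simp

theorem coeff_dualSymbolPoly {R : Type*} [CommRing R] (φ : Module.Dual R (DP R d))
    {a : Fin d → ℕ} (ha : a ∈ Finset.Nat.antidiagonalTuple d n) :
    coeff (Finsupp.equivFunOnFinite.symm a) (dualSymbolPoly φ n) = φ (Finsupp.single a 1) := by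
  rw [dualSymbolPoly, coeff_sum, Finset.sum_eq_single_of_mem a ha]
  · simp [coeff_monomial]
  · exact fun b _ hba => by
      rw [coeff_monomial, if_neg (Finsupp.equivFunOnFinite.symm.injective.ne hba)]

theorem GammaDP_le_span_dpSymbol {F : Type*} [Field F] [Infinite F] (hd : 0 < d) :
    GammaDP F d n ≤ Submodule.span F {x | ∃ v : Fin d → F, v ≠ 0 ∧ dpSymbol v n = x} := by
  rw [GammaDP, Finsupp.supported_eq_span_single, Submodule.span_le]
  rintro _ ⟨a, ha, rfl⟩
  have ha' : a ∈ Finset.Nat.antidiagonalTuple d n := Finset.Nat.mem_antidiagonalTuple.2 ha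
  rw [SetLike.mem_coe, ← Subspace.forall_mem_dualAnnihilator_apply_eq_zero_iff]
  intro φ hφ
  have hpoly : dualSymbolPoly φ n = 0 := by
    refine funext_set (fun _ => {0}ᶜ) (fun _ => (Set.finite_singleton 0).infinite_compl)
      fun v hv => ?_
    have hv0 : v ≠ 0 := fun h => hv ⟨0, hd⟩ trivial (by simp [h])
    rw [eval_dualSymbolPoly, map_zero]
    exact (Submodule.mem_dualAnnihilator φ).1 hφ _ (Submodule.subset_span ⟨v, hv0, rfl⟩)
  rw [← coeff_dualSymbolPoly φ ha', hpoly, coeff_zero]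

theorem GammaDP_le_span_dpSymbol_algebraMap {F A : Type*} [Field F] [Infinite F] [CommRing A]
    [Algebra F A] (hd : 0 < d) :
    GammaDP A d n ≤ Submodule.span A
      {x | ∃ v : Fin d → F, v ≠ 0 ∧ dpSymbol (fun j => algebraMap F A (v j)) n = x} := by
  let L := Finsupp.mapRange.linearMap (α := Fin d → ℕ) (Algebra.linearMap F A)
  rw [GammaDP, Finsupp.supported_eq_span_single, Submodule.span_le]
  rintro _ ⟨a, ha, rfl⟩
  have hsingle : Finsupp.single a (1 : F) ∈ GammaDP F d n := Finsupp.single_mem_supported F 1 ha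
  have himage := Submodule.apply_mem_span_image_of_mem_span L
    (GammaDP_le_span_dpSymbol (n := n) hd hsingle)
  rw [Finsupp.mapRange.linearMap_apply, Finsupp.mapRange_single, Algebra.linearMap_apply,
    map_one] at himage
  refine Submodule.span_le_restrictScalars F A _ (Submodule.span_mono ?_ himage)
  rintro _ ⟨_, ⟨v, hv, rfl⟩, rfl⟩
  exact ⟨v, hv, (mapRange_dpSymbol _ v).symm⟩

end Span

namespace MvPolynomial

theorem eval_eq_eval_zero_of_forall_smul {σ F : Type*} [Field F] [Infinite F]
    (p : MvPolynomial σ F) (v : σ → F) (h : ∀ t : F, t ≠ 0 → eval (t • v) p = eval v p) :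
    eval v p = eval 0 p := by
  obtain ⟨q, hq⟩ : ∃ q : Polynomial F, ∀ t, q.eval t = eval (t • v) p :=
    ⟨eval₂ Polynomial.C (fun j => Polynomial.C (v j) * Polynomial.X) p, fun t => by
      rw [polynomial_eval_eval₂, eval, coe_eval₂Hom]
      congr 1
      · ext; simp
      · ext j
        simp only [Polynomial.eval_mul, Polynomial.eval_C, Polynomial.eval_X, Pi.smul_apply,
          smul_eq_mul]
        exact mul_comm _ _⟩
  have hconst : q = Polynomial.C (eval v p) := by
    refine Polynomial.eq_of_infinite_eval_eq _ _
      ((Set.finite_singleton 0).infinite_compl.mono fun t ht => ?_)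
    simp only [Set.mem_ofPred_eq, hq, h t ht, Polynomial.eval_C]
  simpa [hconst] using hq 0

end MvPolynomial

theorem smul_eq_smul_iff_of_isUnit_apply {R : Type*} [CommRing R] {ι : Type*} {x : ι →₀ R}
    {a : ι} (ha : IsUnit (x a)) {c c' : R} : c • x = c' • x ↔ c = c' := by
  refine ⟨fun h => ha.mul_left_cancel ?_, fun h => h ▸ rfl⟩
  simpa [mul_comm] using congrArg (· a) h

theorem eigenvalue_smul_eq {F A : Type*} [Field F] [CommRing A] [Algebra F A] {d n : ℕ}
    (f : DP A d →ₗ[A] DP A d) (μ : (Fin d → F) → A)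
    (hf : ∀ v : Fin d → F, v ≠ 0 → f (dpSymbol (fun j => algebraMap F A (v j)) n)
      = μ v • dpSymbol (fun j => algebraMap F A (v j)) n)
    {v : Fin d → F} (hv : v ≠ 0) {t : F} (ht : t ≠ 0) : μ (t • v) = μ v := by
  obtain ⟨i, hi⟩ := Function.ne_iff.1 hv
  have hsymbol : dpSymbol (fun j => algebraMap F A ((t • v) j)) n
      = algebraMap F A t ^ n • dpSymbol (fun j => algebraMap F A (v j)) n := by
    rw [← dpSymbol_smul]
    congr 1
    ext j
    simp
  have hunit : IsUnit (dpSymbol (fun j => algebraMap F A ((t • v) j)) n (Pi.single i n)) := by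
    rw [dpSymbol_apply_single]
    exact ((isUnit_iff_ne_zero.2 (mul_ne_zero ht hi)).map (algebraMap F A)).pow n
  rw [← smul_eq_smul_iff_of_isUnit_apply hunit, ← hf _ (smul_ne_zero ht hv), hsymbol, map_smul,
    hf v hv, smul_comm]

open MvPolynomial in
theorem stmt19_general {F : Type*} [Field F] [Infinite F] {d n : ℕ} (hd : 2 ≤ d)
    (lam₁ lam₂ : MvPolynomial (Fin d) F)
    (hlam₁ : ∀ v : Fin d → F, v ≠ 0 → eval v lam₁ ≠ 0)
    (f' : DP (DualNumber F) d →ₗ[DualNumber F] DP (DualNumber F) d)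
    (hf : ∀ v : Fin d → F, v ≠ 0 →
      f' (dpSymbol (fun j => algebraMap F (DualNumber F) (v j)) n)
        = (algebraMap F (DualNumber F) (eval v lam₁) + (eval v lam₂) • DualNumber.eps) •
            dpSymbol (fun j => algebraMap F (DualNumber F) (v j)) n) :
    (∀ v w : Fin d → F, v ≠ 0 → w ≠ 0 →
      eval v lam₁ = eval w lam₁ ∧ eval v lam₂ = eval w lam₂) ∧
    ∃ c : DualNumber F, IsUnit c ∧ ∀ x ∈ GammaDP (DualNumber F) d n, f' x = c • x := by
  let μ v : DualNumber F :=
    algebraMap F (DualNumber F) (eval v lam₁) + eval v lam₂ • DualNumber.eps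
  have hconst (v : Fin d → F) (hv : v ≠ 0) :
      eval v lam₁ = eval 0 lam₁ ∧ eval v lam₂ = eval 0 lam₂ := by
    have hscale (t : F) (ht : t ≠ 0) := eigenvalue_smul_eq f' μ hf hv ht
    constructor <;> refine eval_eq_eval_zero_of_forall_smul _ _ fun t ht => ?_
    · simpa [μ, TrivSqZeroExt.algebraMap_eq_inl'] using congrArg (·.fst) (hscale t ht)
    · simpa [μ, TrivSqZeroExt.algebraMap_eq_inl'] using congrArg (·.snd) (hscale t ht)
  have hμ : ∀ v w : Fin d → F, v ≠ 0 → w ≠ 0 → μ v = μ w := fun v w hv hw => by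
    simp only [μ, (hconst v hv).1, (hconst v hv).2, (hconst w hw).1, (hconst w hw).2]
  refine ⟨fun v w hv hw => ⟨(hconst v hv).1.trans (hconst w hw).1.symm,
    (hconst v hv).2.trans (hconst w hw).2.symm⟩, ?_⟩
  have : Nonempty (Fin d) := ⟨⟨0, by omega⟩⟩
  obtain ⟨v₀, hv₀⟩ := exists_ne (0 : Fin d → F)
  refine ⟨μ v₀, ?_, fun x hx => ?_⟩
  · rw [TrivSqZeroExt.isUnit_iff_isUnit_fst]
    simpa [μ, TrivSqZeroExt.algebraMap_eq_inl'] using hlam₁ _ hv₀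
  · refine LinearMap.eqOn_span (g := μ v₀ • LinearMap.id) ?_
      (GammaDP_le_span_dpSymbol_algebraMap (F := F) (by omega) hx)
    rintro _ ⟨v, hv, rfl⟩
    rw [hf v hv]
    exact congrArg (· • _) (hμ v _ hv hv₀)

open MvPolynomial in
/-- Let `F` be an (infinite) field, `V = F^d` with `d ≥ 2`, `n ≥ 1`.
Suppose `f′ ∈ GL(Γ^n(V))(F[ε])` is a linear automorphism over the dual numbers and
`λ = λ₁ + λ₂ε : V − {0} → (F[ε])^×` is a morphism of `F`-schemes (given, after the canonical
extension to `V` by normality, by a pair of polynomial maps `λ₁, λ₂` with `λ₁` nowhere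
vanishing on `V − {0}`) such that `f′([v]_n) = λ(v)·[v]_n` identically on points.
Then `λ` is constant; consequently, `f′` is a scalar (unit) multiple of the identity on
`Γ^n(V)`, i.e. after rescaling `f′` fixes all pure symbols and is the identity. -/
theorem stmt19 {F : Type*} [Field F] [Infinite F] {d n : ℕ} (hd : 2 ≤ d) (hn : 1 ≤ n)
    (lam₁ lam₂ : MvPolynomial (Fin d) F)
    (hlam₁ : ∀ v : Fin d → F, v ≠ 0 → eval v lam₁ ≠ 0)
    (f' : DP (DualNumber F) d →ₗ[DualNumber F] DP (DualNumber F) d)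
    (hbij : Function.Bijective f')
    (hf : ∀ v : Fin d → F, v ≠ 0 →
      f' (dpSymbol (fun j => algebraMap F (DualNumber F) (v j)) n)
        = (algebraMap F (DualNumber F) (eval v lam₁) + (eval v lam₂) • DualNumber.eps) •
            dpSymbol (fun j => algebraMap F (DualNumber F) (v j)) n) :
    (∀ v w : Fin d → F, v ≠ 0 → w ≠ 0 →
      eval v lam₁ = eval w lam₁ ∧ eval v lam₂ = eval w lam₂) ∧
    ∃ c : DualNumber F, IsUnit c ∧ ∀ x ∈ GammaDP (DualNumber F) d n, f' x = c • x :=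
  stmt19_general hd lam₁ lam₂ hlam₁ f' hf

end
end
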